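/- arXiv:2512.06525 — 4 statements merged into one kernel-verified Lean document; each statement's English description precedes it below -/
import Mathlib

section
/- Let q : [0,1] → [0, q_max] be nonincreasing, let r(x) = p(x)q(x), and suppose for every c the local first-order condition r′(c) − c·q′(c) = 0 holds (wherever differentiable, with q, r piecewise differentiable). Then the global incentive compatibility condition holds: for all c, y ∈ [0,1], r(c) − c·q(c) ≥ r(y) − c·q(y). -/
/-!
The first-order condition turns the derivative of the deviation payoff `y ↦ r y - c * q y` into
`(y - c) * q' y`. Since `q` is nonincreasing, `q' ≤ 0`, so this payoff increases up to `c` and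
decreases after it: truthful reporting is a global maximum.
-/

open Set

theorem HasDerivAt.nonpos_of_antitoneOn_Icc {f : ℝ → ℝ} {f' a b x : ℝ} (hab : a < b)
    (hx : x ∈ Icc a b) (hf : HasDerivAt f f' x) (hmono : AntitoneOn f (Icc a b)) : f' ≤ 0 :=
  hf.hasDerivWithinAt.nonpos_of_antitoneOn (uniqueDiffOn_Icc hab x hx).accPt hmono

theorem isMaxOn_Icc_of_hasDerivAt_sign {g g' : ℝ → ℝ} {a b c : ℝ} (hc : c ∈ Icc a b)
    (hg : ∀ x ∈ Icc a b, HasDerivAt g (g' x) x)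
    (hleft : ∀ x ∈ Ioo a c, 0 ≤ g' x) (hright : ∀ x ∈ Ioo c b, g' x ≤ 0) :
    IsMaxOn g (Icc a b) c := by
  have hcont : ContinuousOn g (Icc a b) := fun x hx => (hg x hx).continuousAt.continuousWithinAt
  have hmono : MonotoneOn g (Icc a c) := by
    refine monotoneOn_of_hasDerivWithinAt_nonneg (convex_Icc a c)
      (hcont.mono (Icc_subset_Icc_right hc.2)) (fun x hx => ?_) (by simpa using hleft)
    rw [interior_Icc] at hx
    exact (hg x ⟨hx.1.le, hx.2.le.trans hc.2⟩).hasDerivWithinAt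
  have hanti : AntitoneOn g (Icc c b) := by
    refine antitoneOn_of_hasDerivWithinAt_nonpos (convex_Icc c b)
      (hcont.mono (Icc_subset_Icc_left hc.1)) (fun x hx => ?_) (by simpa using hright)
    rw [interior_Icc] at hx
    exact (hg x ⟨hc.1.trans hx.1.le, hx.2.le⟩).hasDerivWithinAt
  intro y hy
  rcases le_total y c with hyc | hcy
  · exact hmono ⟨hy.1, hyc⟩ ⟨hc.1, le_rfl⟩ hyc
  · exact hanti ⟨le_rfl, hc.2⟩ ⟨hcy, hy.2⟩ hcy

theorem stmt_6_general (q r q' r' : ℝ → ℝ)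
    (hqd : ∀ c ∈ Icc (0:ℝ) 1, HasDerivAt q (q' c) c)
    (hrd : ∀ c ∈ Icc (0:ℝ) 1, HasDerivAt r (r' c) c)
    (hFOC : ∀ c ∈ Icc (0:ℝ) 1, r' c - c * q' c = 0)
    (hmono : AntitoneOn q (Icc 0 1)) :
    ∀ c ∈ Icc (0:ℝ) 1, ∀ y ∈ Icc (0:ℝ) 1,
      r y - c * q y ≤ r c - c * q c := by
  intro c hc y hy
  have hq' : ∀ x ∈ Icc (0:ℝ) 1, q' x ≤ 0 := fun x hx =>
    (hqd x hx).nonpos_of_antitoneOn_Icc zero_lt_one hx hmono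
  have hpayoff : ∀ x ∈ Icc (0:ℝ) 1,
      HasDerivAt (fun x => r x - c * q x) ((x - c) * q' x) x := fun x hx =>
    ((hrd x hx).sub ((hqd x hx).const_mul c)).congr_deriv (by linear_combination hFOC x hx)
  refine isMaxOn_Icc_of_hasDerivAt_sign hc hpayoff (fun x hx => ?_) (fun x hx => ?_) hy
  · have hx01 : x ∈ Icc (0:ℝ) 1 := ⟨hx.1.le, hx.2.le.trans hc.2⟩
    exact mul_nonneg_of_nonpos_of_nonpos (by linarith [hx.2]) (hq' x hx01)
  · have hx01 : x ∈ Icc (0:ℝ) 1 := ⟨hc.1.trans hx.1.le, hx.2.le⟩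
    exact mul_nonpos_of_nonneg_of_nonpos (by linarith [hx.1]) (hq' x hx01)

/-- Let `q : [0,1] → [0, qmax]` be nonincreasing, let
`r x = p x * q x`, and suppose the local first-order condition
`r' c - c * q' c = 0` holds for every `c ∈ [0,1]` (with `q, r` differentiable
with derivatives `q'`, `r'`). Then global incentive compatibility holds:
for all `c, y ∈ [0,1]`, `r c - c * q c ≥ r y - c * q y`. -/
theorem stmt_6 (qmax : ℝ) (p q r q' r' : ℝ → ℝ)
    (hqmax : 0 < qmax)
    (hr : ∀ x, r x = p x * q x)
    (hrange : ∀ x ∈ Icc (0:ℝ) 1, q x ∈ Icc (0:ℝ) qmax)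
    (hqd : ∀ c ∈ Icc (0:ℝ) 1, HasDerivAt q (q' c) c)
    (hrd : ∀ c ∈ Icc (0:ℝ) 1, HasDerivAt r (r' c) c)
    (hFOC : ∀ c ∈ Icc (0:ℝ) 1, r' c - c * q' c = 0)
    (hmono : AntitoneOn q (Icc 0 1)) :
    ∀ c ∈ Icc (0:ℝ) 1, ∀ y ∈ Icc (0:ℝ) 1,
      r y - c * q y ≤ r c - c * q c :=
  stmt_6_general q r q' r' hqd hrd hFOC hmono
end

section
/- Suppose the mechanism (q, Π) satisfies incentive compatibility, Π is continuous with Π′(c) = −q(c) almost everywhere, and the no-subsidy constraint q(c)(P(q(c)) − c) − k·1_{q(c)>0} ≥ Π(c) holds. If q is nonincreasing then there exists a cutoff c̄ ∈ (0, c̄_LF] such that q(c) = 0 for c > c̄ and q(c) > 0 for c < c̄; moreover c̄ ≤ c̄_LF where c̄_LF is defined by max_q q(P(q) − c̄_LF) = k. -/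
open Set

/- The no-subsidy constraint and `Π ≥ 0` give `q c * (P (q c) - c) ≥ k` wherever `q c > 0`,
which laissez-faire excludes beyond `c̄_LF`. Since `q` is nonincreasing and nonnegative, its
positivity set is an initial segment, and its supremum is the cutoff. -/

section Cutoff

variable {q : ℝ → ℝ} {a b c : ℝ}

lemma le_csSup_pos_set (hc : c ∈ Icc a b) (hq : 0 < q c) :
    c ≤ sSup {x ∈ Icc a b | 0 < q x} :=
  le_csSup ⟨b, fun _ hx => hx.1.2⟩ ⟨hc, hq⟩

lemma eq_zero_of_csSup_pos_set_lt (hc : c ∈ Icc a b) (hnn : 0 ≤ q c)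
    (hlt : sSup {x ∈ Icc a b | 0 < q x} < c) : q c = 0 :=
  (hnn.lt_or_eq.resolve_left fun hq => (le_csSup_pos_set hc hq).not_gt hlt).symm

lemma AntitoneOn.pos_of_lt_csSup_pos_set (hmono : AntitoneOn q (Icc a b)) (hc : c ∈ Icc a b)
    (hne : ∃ x ∈ Icc a b, 0 < q x) (hlt : c < sSup {x ∈ Icc a b | 0 < q x}) : 0 < q c := by
  obtain ⟨x, ⟨hx, hqx⟩, hcx⟩ := exists_lt_of_lt_csSup (by simpa [Set.Nonempty] using hne) hlt
  exact hqx.trans_le (hmono hc hx hcx.le)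

end Cutoff

theorem stmt_8_general (qmax k cbarLF : ℝ) (P q Pi : ℝ → ℝ)
    (hmono : AntitoneOn q (Icc 0 1))
    (hrange : ∀ c ∈ Icc (0:ℝ) 1, q c ∈ Icc (0:ℝ) qmax)
    (hnz : ∃ c ∈ Ioo (0:ℝ) 1, 0 < q c)
    (hPi : ∀ c ∈ Icc (0:ℝ) 1, Pi c = ∫ x in c..1, q x)
    (hNS : ∀ c ∈ Icc (0:ℝ) 1, 0 < q c → Pi c ≤ q c * (P (q c) - c) - k)
    (hLF : ∀ c ∈ Icc (0:ℝ) 1, cbarLF < c →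
      ∀ q' ∈ Icc (0:ℝ) qmax, 0 < q' → q' * (P q' - c) < k) :
    ∃ cbar : ℝ, 0 < cbar ∧ cbar ≤ cbarLF ∧
      (∀ c ∈ Icc (0:ℝ) 1, cbar < c → q c = 0) ∧
      (∀ c ∈ Icc (0:ℝ) 1, c < cbar → 0 < q c) := by
  have hPi_nonneg : ∀ c ∈ Icc (0:ℝ) 1, 0 ≤ Pi c := fun c hc => by
    rw [hPi c hc]
    exact intervalIntegral.integral_nonneg hc.2
      fun x hx => (hrange x ⟨hc.1.trans hx.1, hx.2⟩).1
  have hle_LF : ∀ c ∈ Icc (0:ℝ) 1, 0 < q c → c ≤ cbarLF := fun c hc hq => by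
    by_contra! hlt
    linarith [hNS c hc hq, hLF c hc hlt (q c) (hrange c hc) hq, hPi_nonneg c hc]
  obtain ⟨c₀, hc₀, hq₀⟩ := hnz
  have hc₀' : c₀ ∈ Icc (0:ℝ) 1 := Ioo_subset_Icc_self hc₀
  refine ⟨sSup {x ∈ Icc 0 1 | 0 < q x},
    hc₀.1.trans_le (le_csSup_pos_set hc₀' hq₀),
    csSup_le ⟨c₀, hc₀', hq₀⟩ fun x hx => hle_LF x hx.1 hx.2,
    fun c hc => eq_zero_of_csSup_pos_set_lt hc (hrange c hc).1,
    fun c hc => hmono.pos_of_lt_csSup_pos_set hc ⟨c₀, hc₀', hq₀⟩⟩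

/-- Suppose the mechanism `(q, Π)` satisfies incentive
compatibility (`q` nonincreasing and `Π c = ∫_c^1 q`), and the no-subsidy
constraint `q c * (P (q c) - c) - k ≥ Π c` whenever `q c > 0`.  If `q` is
nonincreasing (and not identically zero, since the all-zero policy is dominated
by the feasible laissez-faire policy), then there exists a cutoff
`c̄ ∈ (0, c̄_LF]` such that `q c = 0` for `c > c̄` and `q c > 0` for `c < c̄`.
Here `c̄_LF` is the laissez-faire exclusion cutoff, defined by
`max_q q * (P q - c̄_LF) = k`, so that for `c > c̄_LF` every positive quantity
earns strictly less than the fixed cost `k`. -/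
theorem stmt_8 (qmax k cbarLF : ℝ) (P q Pi : ℝ → ℝ)
    (hqmax : 0 < qmax) (hk : 0 ≤ k)
    (hmono : AntitoneOn q (Icc 0 1))
    (hrange : ∀ c ∈ Icc (0:ℝ) 1, q c ∈ Icc (0:ℝ) qmax)
    (hnz : ∃ c ∈ Ioo (0:ℝ) 1, 0 < q c)
    (hPi : ∀ c ∈ Icc (0:ℝ) 1, Pi c = ∫ x in c..1, q x)
    (hNS : ∀ c ∈ Icc (0:ℝ) 1, 0 < q c → Pi c ≤ q c * (P (q c) - c) - k)
    (hLF : ∀ c ∈ Icc (0:ℝ) 1, cbarLF < c →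
      ∀ q' ∈ Icc (0:ℝ) qmax, 0 < q' → q' * (P q' - c) < k) :
    ∃ cbar : ℝ, 0 < cbar ∧ cbar ≤ cbarLF ∧
      (∀ c ∈ Icc (0:ℝ) 1, cbar < c → q c = 0) ∧
      (∀ c ∈ Icc (0:ℝ) 1, c < cbar → 0 < q c) :=
  stmt_8_general qmax k cbarLF P q Pi hmono hrange hnz hPi hNS hLF
end

section
/- In the no-subsidy regulation problem with continuous, monotone policies, if the no-subsidy constraint binds on an interval, then on that interval incentive compatibility forces at each point either q′(c) = 0 or the laissez-faire condition P(q(c)) + q(c)·P′(q(c)) = c. -/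
open Set Filter Topology

/-! Along the interval, `Π` coincides with the profit `q P(q) − c q − k` of the policy, whose
derivative is `q′ (P(q) + q P′(q) − c) − q` by the chain and product rules. Incentive
compatibility says this derivative is `−q`, so `q′ (P(q) + q P′(q) − c) = 0`. -/

theorem hasDerivAt_policyProfit {P q : ℝ → ℝ} {P' q' c : ℝ} (k : ℝ)
    (hq : HasDerivAt q q' c) (hP : HasDerivAt P P' (q c)) :
    HasDerivAt (fun x => q x * P (q x) - x * q x - k)
      (q' * (P (q c) + q c * P' - c) - q c) c := by
  have hPq : HasDerivAt (fun x => P (q x)) (P' * q') c := hP.comp c hq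
  refine (((hq.mul hPq).sub ((hasDerivAt_id' c).mul hq)).sub_const k).congr_deriv ?_
  ring

theorem mul_marginalProfit_eq_zero_of_eventuallyEq {P q Pi : ℝ → ℝ} {P' q' c k : ℝ}
    (hbind : Pi =ᶠ[𝓝 c] fun x => q x * P (q x) - x * q x - k)
    (hPi : HasDerivAt Pi (-q c) c) (hq : HasDerivAt q q' c) (hP : HasDerivAt P P' (q c)) :
    q' * (P (q c) + q c * P' - c) = 0 := by
  have hderiv := ((hasDerivAt_policyProfit k hq hP).congr_of_eventuallyEq hbind).unique hPi
  linarith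

theorem stmt_9_general (k a b : ℝ) (P P' q q' Pi : ℝ → ℝ)
    (hbind : ∀ c ∈ Icc a b, Pi c = q c * P (q c) - c * q c - k)
    (hPid : ∀ c ∈ Ioo a b, HasDerivAt Pi (-(q c)) c)
    (hqd : ∀ c ∈ Ioo a b, HasDerivAt q (q' c) c)
    (hPd : ∀ c ∈ Ioo a b, HasDerivAt P (P' (q c)) (q c)) :
    ∀ c ∈ Ioo a b, q' c = 0 ∨ P (q c) + q c * P' (q c) = c := by
  intro c hc
  have hbind_nhds : Pi =ᶠ[𝓝 c] fun x => q x * P (q x) - x * q x - k :=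
    eventually_of_mem (Ioo_mem_nhds hc.1 hc.2) fun x hx => hbind x (Ioo_subset_Icc_self hx)
  rcases mul_eq_zero.mp (mul_marginalProfit_eq_zero_of_eventuallyEq hbind_nhds (hPid c hc)
    (hqd c hc) (hPd c hc)) with h | h
  · exact Or.inl h
  · exact Or.inr (by linarith)

/-- In the no-subsidy regulation problem with continuous,
monotone policies, if the no-subsidy constraint binds on an interval `[a, b]`
(i.e. `Π c = q c * P (q c) - c * q c - k` there), then incentive compatibility
(`Π' c = - q c`) forces, at each interior point of the interval, either
`q' c = 0` or the laissez-faire condition `P (q c) + q c * P' (q c) = c`. -/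
theorem stmt_9 (k a b : ℝ) (P P' q q' Pi : ℝ → ℝ)
    (hab : a < b)
    (hbind : ∀ c ∈ Icc a b, Pi c = q c * P (q c) - c * q c - k)
    (hPid : ∀ c ∈ Ioo a b, HasDerivAt Pi (-(q c)) c)
    (hqd : ∀ c ∈ Ioo a b, HasDerivAt q (q' c) c)
    (hPd : ∀ c ∈ Ioo a b, HasDerivAt P (P' (q c)) (q c)) :
    ∀ c ∈ Ioo a b, q' c = 0 ∨ P (q c) + q c * P' (q c) = c :=
  stmt_9_general k a b P P' q q' Pi hbind hPid hqd hPd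
end

section
/- Let H : [a, b] → (0, ∞) be strictly log-concave and continuously differentiable. Then the function c ↦ (∫_c^b H(x) dx)/H(c) is strictly decreasing on [a, b). -/
open Set MeasureTheory

/-- Let `H : [a, b] → (0, ∞)` be strictly log-concave and
continuously differentiable.  Then `c ↦ (∫_c^b H) / H c` is strictly
decreasing on `[a, b)`. -/
theorem stmt_12 (a b : ℝ) (H : ℝ → ℝ)
    (hab : a < b)
    (hpos : ∀ x ∈ Icc a b, 0 < H x)
    (hC1 : ContDiffOn ℝ 1 H (Icc a b))
    (hlc : StrictConcaveOn ℝ (Icc a b) (fun x => Real.log (H x))) :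
    StrictAntiOn (fun c => (∫ x in c..b, H x) / H c) (Ico a b) := by
  have hcont : ContinuousOn H (Icc a b) := hC1.continuousOn
  have hconc : ConcaveOn ℝ (Icc a b) (fun x => Real.log (H x)) := hlc.concaveOn
  have hint : ∀ u v : ℝ, u ∈ Icc a b → v ∈ Icc a b → IntervalIntegrable H volume u v := by
    intro u v hu hv
    exact (hcont.mono (uIcc_subset_Icc hu hv)).intervalIntegrable
  intro c₁ hc₁ c₂ hc₂ h12
  set d := c₂ - c₁ with hd
  have hd0 : 0 < d := sub_pos.2 h12
  have hc₁m : c₁ ∈ Icc a b := ⟨hc₁.1, hc₁.2.le⟩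
  have hc₂m : c₂ ∈ Icc a b := ⟨hc₂.1, hc₂.2.le⟩
  have hHc₁ : 0 < H c₁ := hpos _ hc₁m
  have hHc₂ : 0 < H c₂ := hpos _ hc₂m
  -- key pointwise inequality
  have key : ∀ x ∈ Icc c₂ b, H x / H c₂ ≤ H (x - d) / H c₁ := by
    intro x hx
    have hxm : x ∈ Icc a b := ⟨le_trans hc₂.1 hx.1, hx.2⟩
    have hxdm : x - d ∈ Icc a b := by
      constructor
      · have : c₁ ≤ x - d := by simp only [hd]; linarith [hx.1]
        linarith [hc₁.1]
      · linarith [hx.2, hd0.le]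
    have hxc₁ : c₁ < x := lt_of_lt_of_le h12 hx.1
    set lam := d / (x - c₁) with hlam
    have hxc₁' : 0 < x - c₁ := sub_pos.2 hxc₁
    have hlam0 : 0 < lam := div_pos hd0 hxc₁'
    have hlam1 : lam ≤ 1 := by
      rw [hlam, div_le_one hxc₁']
      simp only [hd]; linarith [hx.1]
    have hcomb1 : (1 - lam) • c₁ + lam • x = c₂ := by
      simp only [smul_eq_mul, hlam]
      field_simp
      ring
    have hcomb2 : lam • c₁ + (1 - lam) • x = x - d := by
      simp only [smul_eq_mul, hlam]
      field_simp
      ring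
    have h1 := hconc.2 hc₁m hxm (by linarith : (0:ℝ) ≤ 1 - lam) hlam0.le (by ring)
    have h2 := hconc.2 hc₁m hxm hlam0.le (by linarith : (0:ℝ) ≤ 1 - lam) (by ring)
    rw [hcomb1] at h1
    rw [hcomb2] at h2
    simp only [smul_eq_mul] at h1 h2
    have hsum : Real.log (H x) + Real.log (H c₁)
        ≤ Real.log (H (x - d)) + Real.log (H c₂) := by nlinarith
    have hexp := Real.exp_le_exp.2 hsum
    rw [Real.exp_add, Real.exp_add, Real.exp_log (hpos _ hxm), Real.exp_log hHc₁,
      Real.exp_log (hpos _ hxdm), Real.exp_log hHc₂] at hexp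
    rw [div_le_div_iff₀ hHc₂ hHc₁]
    linarith
  -- integrability of shifted function
  have hintshift : IntervalIntegrable (fun x => H (x - d) / H c₁) volume c₂ b := by
    have hcont2 : ContinuousOn (fun x => H (x - d) / H c₁) (Icc c₂ b) := by
      apply ContinuousOn.div_const
      apply hcont.comp (continuousOn_id.sub continuousOn_const)
      intro x hx
      constructor
      · show a ≤ x - d; linarith [hx.1, hc₁.1, hd]
      · show x - d ≤ b; linarith [hx.2, hd0.le]
    exact (hcont2.mono (by rw [uIcc_of_le hc₂.2.le])).intervalIntegrable
  have hint2 : IntervalIntegrable (fun x => H x / H c₂) volume c₂ b := by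
    exact ((hcont.mono (uIcc_subset_Icc hc₂m (right_mem_Icc.2 hab.le))).div_const _).intervalIntegrable
  have step1 : (∫ x in c₂..b, H x) / H c₂ ≤ (∫ x in c₁..(b - d), H x) / H c₁ := by
    calc (∫ x in c₂..b, H x) / H c₂ = ∫ x in c₂..b, H x / H c₂ := by
          rw [intervalIntegral.integral_div]
      _ ≤ ∫ x in c₂..b, H (x - d) / H c₁ :=
          intervalIntegral.integral_mono_on hc₂.2.le hint2 hintshift key
      _ = (∫ x in c₂..b, H (x - d)) / H c₁ := by
          rw [intervalIntegral.integral_div]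
      _ = (∫ x in c₁..(b - d), H x) / H c₁ := by
          rw [intervalIntegral.integral_comp_sub_right H d]
          norm_num [hd]
  have hbd : b - d ∈ Icc a b := by
    constructor
    · have : c₁ ≤ b - d := by simp only [hd]; linarith [hc₂.2]
      linarith [hc₁.1]
    · linarith [hd0.le]
  have step2 : (∫ x in c₁..(b - d), H x) < ∫ x in c₁..b, H x := by
    have hsplit : (∫ x in c₁..(b-d), H x) + (∫ x in (b-d)..b, H x) = ∫ x in c₁..b, H x :=
      intervalIntegral.integral_add_adjacent_intervals (hint _ _ hc₁m hbd)
        (hint _ _ hbd (right_mem_Icc.2 hab.le))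
    have hposint : 0 < ∫ x in (b-d)..b, H x := by
      apply intervalIntegral.intervalIntegral_pos_of_pos_on
        (hint _ _ hbd (right_mem_Icc.2 hab.le))
      · intro x hx
        exact hpos x ⟨le_trans hbd.1 hx.1.le, hx.2.le⟩
      · linarith
    linarith
  calc (∫ x in c₂..b, H x) / H c₂ ≤ (∫ x in c₁..(b - d), H x) / H c₁ := step1
    _ < (∫ x in c₁..b, H x) / H c₁ := (div_lt_div_iff_of_pos_right hHc₁).2 step2
end
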